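/- Let μ > 0 and ν ∈ ℂ. The function ψ(p) = μ^{−ip} Γ(i(p+ν)/2) Γ(i(p−ν)/2), where μ^{−ip} = exp(−ip·ln μ) and Γ is the complex Gamma function, satisfies the difference equation ¼(ν² − p²) ψ(p) − μ² ψ(p − 2i) = 0 for every p ∈ ℂ such that i(p+ν)/2 and i(p−ν)/2 are not nonpositive integers (so that all Gamma values involved are defined). -/
import Mathlib


/-- `ψ(p) = μ^{−ip} Γ(i(p+ν)/2) Γ(i(p−ν)/2)`, with `μ^{−ip} = exp(−ip ln μ)`
via the real logarithm of `μ > 0`. -/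
noncomputable def whittakerMomentum (μ : ℝ) (ν p : ℂ) : ℂ :=
  Complex.exp (-Complex.I * p * (Real.log μ : ℂ))
    * Complex.Gamma (Complex.I * (p + ν) / 2)
    * Complex.Gamma (Complex.I * (p - ν) / 2)

/-- The momentum-space Whittaker function `ψ(p) = μ^{−ip}Γ(i(p+ν)/2)Γ(i(p−ν)/2)`
satisfies the difference equation `¼(ν² − p²)ψ(p) − μ²ψ(p − 2i) = 0` whenever
`i(p+ν)/2` and `i(p−ν)/2` are not nonpositive integers. -/
theorem whittakerMomentum_difference_eq (μ : ℝ) (hμ : 0 < μ) (ν p : ℂ)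
    (h1 : ∀ m : ℕ, Complex.I * (p + ν) / 2 ≠ -(m : ℂ))
    (h2 : ∀ m : ℕ, Complex.I * (p - ν) / 2 ≠ -(m : ℂ)) :
    (1 / 4) * (ν ^ 2 - p ^ 2) * whittakerMomentum μ ν p
      - (μ : ℂ) ^ 2 * whittakerMomentum μ ν (p - 2 * Complex.I) = 0 := by
  set L : ℂ := (Real.log μ : ℂ) with hL
  have hz1 : Complex.I * (p + ν) / 2 ≠ 0 := by simpa using h1 0
  have hz2 : Complex.I * (p - ν) / 2 ≠ 0 := by simpa using h2 0
  have e1 : Complex.I * (p - 2 * Complex.I + ν) / 2 = Complex.I * (p + ν) / 2 + 1 := by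
    linear_combination -Complex.I_sq
  have e2 : Complex.I * (p - 2 * Complex.I - ν) / 2 = Complex.I * (p - ν) / 2 + 1 := by
    linear_combination -Complex.I_sq
  have e3 : Complex.exp (-Complex.I * (p - 2 * Complex.I) * L)
      = Complex.exp (-Complex.I * p * L) * Complex.exp (-(2 * L)) := by
    rw [← Complex.exp_add]
    congr 1
    linear_combination (2 * L) * Complex.I_sq
  have e4 : (μ : ℂ) ^ 2 * Complex.exp (-(2 * L)) = 1 := by
    have hexp : Complex.exp L = (μ : ℂ) := by
      rw [hL, ← Complex.ofReal_exp, Real.exp_log hμ]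
    have h2L : Complex.exp (-(2 * L)) = ((μ : ℂ) ^ 2)⁻¹ := by
      rw [show -(2 * L) = -(L + L) by ring, Complex.exp_neg, Complex.exp_add, hexp, sq]
    rw [h2L, mul_inv_cancel₀ (pow_ne_zero 2 (by exact_mod_cast hμ.ne'))]
  unfold whittakerMomentum
  rw [e1, e2, e3, Complex.Gamma_add_one _ hz1, Complex.Gamma_add_one _ hz2]
  have : (μ : ℂ) ^ 2 * (Complex.exp (-Complex.I * p * L) * Complex.exp (-(2 * L)) *
      (Complex.I * (p + ν) / 2 * Complex.Gamma (Complex.I * (p + ν) / 2)) *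
      (Complex.I * (p - ν) / 2 * Complex.Gamma (Complex.I * (p - ν) / 2)))
      = ((μ : ℂ) ^ 2 * Complex.exp (-(2 * L))) * (Complex.I * (p + ν) / 2) *
        (Complex.I * (p - ν) / 2) * (Complex.exp (-Complex.I * p * L) *
        Complex.Gamma (Complex.I * (p + ν) / 2) *
        Complex.Gamma (Complex.I * (p - ν) / 2)) := by ring
  rw [this, e4, one_mul]
  linear_combination ((Complex.exp (-Complex.I * p * L) *
    Complex.Gamma (Complex.I * (p + ν) / 2) *
    Complex.Gamma (Complex.I * (p - ν) / 2)) * (ν^2 - p^2) / 4) * Complex.I_sq
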